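/- Let f : [a,b] → ℝ with f^{(n−1)} absolutely continuous and γ_n ≤ f^{(n)} ≤ Γ_n a.e. Then |∫_a^b f(t) dt − Σ_{k=0}^{n−1}(1/(k+1)!)((b−a)/2)^{k+1}[f^{(k)}(a) + (−1)^k f^{(k)}(b)] − ((Γ_n+γ_n)/2)[(1+(−1)^n)/(n+1)!]((b−a)/2)^{n+1}| ≤ (1/(2^{n+1}(n+1)!))(Γ_n − γ_n)(b−a)^{n+1}. -/

import Mathlib

open MeasureTheory Set

lemma kernel_deriv (x : ℝ) (m : ℕ) (s : ℝ) :
    HasDerivAt (fun s => -((x - s) ^ (m + 1) / (Nat.factorial (m + 1) : ℝ)))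
      ((x - s) ^ m / (Nat.factorial m : ℝ)) s := by
  have h1 : HasDerivAt (fun s : ℝ => x - s) (-1) s := (hasDerivAt_id s).const_sub x
  have h2 := ((h1.pow (m + 1)).div_const ((Nat.factorial (m + 1) : ℝ))).neg
  refine h2.congr_deriv ?_
  have hf : (Nat.factorial m : ℝ) ≠ 0 := Nat.cast_ne_zero.2 (Nat.factorial_ne_zero m)
  rw [Nat.factorial_succ]
  push_cast
  field_simp

lemma taylor_identity (a b : ℝ) (n : ℕ) (fd : ℕ → ℝ → ℝ) (hab : a < b)
    (hderiv : ∀ k < n, ∀ x ∈ Icc a b, HasDerivAt (fd k) (fd (k + 1) x) x)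
    (hint : IntervalIntegrable (fd n) volume a b) :
    ∀ m ≤ n, (∫ t in a..b, fd 0 t) =
      (∑ k ∈ Finset.range m,
        (1 / (Nat.factorial (k + 1) : ℝ)) * ((b - a) / 2) ^ (k + 1) *
          (fd k a + (-1 : ℝ) ^ k * fd k b)) +
      ∫ s in a..b, (((a + b) / 2 - s) ^ m / (Nat.factorial m : ℝ)) * fd m s := by
  have hIcc : uIcc a b = Icc a b := uIcc_of_le hab.le
  have hKcont : ∀ m : ℕ, Continuous fun s : ℝ => ((a + b) / 2 - s) ^ m / (Nat.factorial m : ℝ) := by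
    intro m; fun_prop
  have hIntK : ∀ m : ℕ, IntervalIntegrable
      (fun s : ℝ => ((a + b) / 2 - s) ^ m / (Nat.factorial m : ℝ)) volume a b :=
    fun m => (hKcont m).intervalIntegrable a b
  have hInt : ∀ k ≤ n, IntervalIntegrable (fd k) volume a b := by
    intro k hk
    rcases eq_or_lt_of_le hk with rfl | hk'
    · exact hint
    · apply ContinuousOn.intervalIntegrable
      rw [hIcc]
      exact fun t ht => ((hderiv k hk' t ht).continuousAt).continuousWithinAt
  intro m
  induction m with
  | zero => intro _; simp
  | succ m ih =>
    intro hm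
    have hmn : m < n := hm
    rw [ih hmn.le, Finset.sum_range_succ]
    have ibp := intervalIntegral.integral_mul_deriv_eq_deriv_mul
      (u := fun s => -(((a + b) / 2 - s) ^ (m + 1) / (Nat.factorial (m + 1) : ℝ)))
      (v := fd m)
      (u' := fun s => ((a + b) / 2 - s) ^ m / (Nat.factorial m : ℝ))
      (v' := fd (m + 1))
      (fun s _ => kernel_deriv _ m s)
      (fun s hs => hderiv m hmn s (hIcc ▸ hs))
      (hIntK m) (hInt (m + 1) hm)
    have hneg : (∫ s in a..b,
        (-(((a + b) / 2 - s) ^ (m + 1) / (Nat.factorial (m + 1) : ℝ))) * fd (m + 1) s)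
        = -∫ s in a..b, (((a + b) / 2 - s) ^ (m + 1) / (Nat.factorial (m + 1) : ℝ)) * fd (m + 1) s := by
      rw [← intervalIntegral.integral_neg]
      congr 1; funext s; ring
    rw [hneg] at ibp
    have hne : (Nat.factorial (m + 1) : ℝ) ≠ 0 := Nat.cast_ne_zero.2 (Nat.factorial_ne_zero _)
    have hxb : (a + b) / 2 - b = -((b - a) / 2) := by ring
    have hxa : (a + b) / 2 - a = (b - a) / 2 := by ring
    have : (∫ s in a..b, (((a + b) / 2 - s) ^ m / (Nat.factorial m : ℝ)) * fd m s)
        = (1 / (Nat.factorial (m + 1) : ℝ)) * ((b - a) / 2) ^ (m + 1) *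
            (fd m a + (-1 : ℝ) ^ m * fd m b) +
          ∫ s in a..b, (((a + b) / 2 - s) ^ (m + 1) / (Nat.factorial (m + 1) : ℝ)) * fd (m + 1) s := by
      have := ibp
      simp only [hxb, hxa] at this
      rw [neg_pow, pow_succ] at this
      linear_combination this
    rw [this]; ring

theorem perturbed_endpoint_taylor_midpoint
    (a b γn Γn : ℝ) (n : ℕ) (fd : ℕ → ℝ → ℝ) (hab : a < b) (hn : 1 ≤ n)
    (hderiv : ∀ k < n, ∀ x ∈ Icc a b, HasDerivAt (fd k) (fd (k + 1) x) x)
    (hint : IntervalIntegrable (fd n) volume a b)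
    (hbound : ∀ᵐ t ∂volume, t ∈ Icc a b → γn ≤ fd n t ∧ fd n t ≤ Γn) :
    |(∫ t in a..b, fd 0 t) -
        (∑ k ∈ Finset.range n,
          (1 / (Nat.factorial (k + 1) : ℝ)) * ((b - a) / 2) ^ (k + 1) *
            (fd k a + (-1 : ℝ) ^ k * fd k b)) -
        ((Γn + γn) / 2) * ((1 + (-1 : ℝ) ^ n) / (Nat.factorial (n + 1))) *
          ((b - a) / 2) ^ (n + 1)| ≤
      (1 / (2 ^ (n + 1) * Nat.factorial (n + 1))) * (Γn - γn) * (b - a) ^ (n + 1) := by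
  have hne1 : (Nat.factorial (n + 1) : ℝ) ≠ 0 := Nat.cast_ne_zero.2 (Nat.factorial_ne_zero _)
  have hnen : (Nat.factorial n : ℝ) ≠ 0 := Nat.cast_ne_zero.2 (Nat.factorial_ne_zero _)
  have hnp1 : ((n : ℝ) + 1) ≠ 0 := by positivity
  have hxb : (a + b) / 2 - b = -((b - a) / 2) := by ring
  have hxa : (a + b) / 2 - a = (b - a) / 2 := by ring
  have hr0 : (0 : ℝ) ≤ (b - a) / 2 := by linarith
  -- γn ≤ Γn
  have hγΓ : γn ≤ Γn := by
    have hne : volume.restrict (Icc a b) ≠ 0 := by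
      rw [Ne, Measure.restrict_eq_zero, Real.volume_Icc]
      simp only [ENNReal.ofReal_eq_zero, not_le]
      linarith
    haveI : (ae (volume.restrict (Icc a b))).NeBot := ae_neBot.2 hne
    obtain ⟨t, ht1, ht2⟩ :=
      ((ae_restrict_of_ae (s := Icc a b) hbound).and (ae_restrict_mem measurableSet_Icc)).exists
    obtain ⟨h1, h2⟩ := ht1 ht2
    linarith
  -- value of ∫ K
  have hIntK : IntervalIntegrable
      (fun s : ℝ => ((a + b) / 2 - s) ^ n / (Nat.factorial n : ℝ)) volume a b := by
    apply Continuous.intervalIntegrable; fun_prop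
  have hC : (∫ s in a..b, ((a + b) / 2 - s) ^ n / (Nat.factorial n : ℝ))
      = ((1 + (-1 : ℝ) ^ n) / (Nat.factorial (n + 1) : ℝ)) * ((b - a) / 2) ^ (n + 1) := by
    rw [intervalIntegral.integral_eq_sub_of_hasDerivAt
      (f := fun s => -(((a + b) / 2 - s) ^ (n + 1) / (Nat.factorial (n + 1) : ℝ)))
      (fun s _ => kernel_deriv _ n s) hIntK]
    rw [hxb, hxa, neg_pow, pow_succ]
    field_simp
    ring
  -- the main identity
  have hkey := taylor_identity a b n fd hab hderiv hint n le_rfl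
  rw [hkey]
  rw [show ∀ (S I P : ℝ), S + I - S - P = I - P from fun S I P => by ring]
  -- perturbation as an integral
  have hP : ((Γn + γn) / 2) * ((1 + (-1 : ℝ) ^ n) / (Nat.factorial (n + 1) : ℝ)) *
        ((b - a) / 2) ^ (n + 1)
      = ∫ s in a..b, ((Γn + γn) / 2) * (((a + b) / 2 - s) ^ n / (Nat.factorial n : ℝ)) := by
    rw [intervalIntegral.integral_const_mul, hC]; ring
  have hKf : IntervalIntegrable
      (fun s : ℝ => (((a + b) / 2 - s) ^ n / (Nat.factorial n : ℝ)) * fd n s) volume a b :=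
    hint.continuousOn_mul (by fun_prop)
  rw [hP, ← intervalIntegral.integral_sub hKf (hIntK.const_mul _)]
  -- a.e. bound
  have hb2 : ∀ᵐ t ∂volume.restrict (Set.uIoc a b),
      ‖(((a + b) / 2 - t) ^ n / (Nat.factorial n : ℝ)) * fd n t -
        ((Γn + γn) / 2) * (((a + b) / 2 - t) ^ n / (Nat.factorial n : ℝ))‖ ≤
      |(a + b) / 2 - t| ^ n / (Nat.factorial n : ℝ) * ((Γn - γn) / 2) := by
    filter_upwards [ae_restrict_of_ae hbound, ae_restrict_mem measurableSet_uIoc] with t h1 h2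
    have hmem : t ∈ Icc a b := by
      rw [uIoc_of_le hab.le] at h2; exact Ioc_subset_Icc_self h2
    obtain ⟨hg, hG⟩ := h1 hmem
    have he : (((a + b) / 2 - t) ^ n / (Nat.factorial n : ℝ)) * fd n t -
        ((Γn + γn) / 2) * (((a + b) / 2 - t) ^ n / (Nat.factorial n : ℝ))
        = (((a + b) / 2 - t) ^ n / (Nat.factorial n : ℝ)) * (fd n t - (Γn + γn) / 2) := by ring
    rw [he, Real.norm_eq_abs, abs_mul, abs_div, abs_pow, Nat.abs_cast]
    exact mul_le_mul_of_nonneg_left (abs_le.2 ⟨by linarith, by linarith⟩) (by positivity)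
  have hGint : IntervalIntegrable
      (fun t : ℝ => |(a + b) / 2 - t| ^ n / (Nat.factorial n : ℝ) * ((Γn - γn) / 2)) volume a b := by
    apply Continuous.intervalIntegrable; fun_prop
  have hle := intervalIntegral.norm_integral_le_abs_of_norm_le hb2 hGint
  rw [Real.norm_eq_abs] at hle
  refine hle.trans ?_
  -- compute ∫ G
  have hJ : (∫ t in a..b, |(a + b) / 2 - t| ^ n)
      = 2 * ((b - a) / 2) ^ (n + 1) / ((n : ℝ) + 1) := by
    have h0 := intervalIntegral.integral_comp_sub_left (fun y : ℝ => |y| ^ n) ((a + b) / 2)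
      (a := a) (b := b)
    rw [hxb, hxa] at h0
    rw [h0]
    have e1 : (∫ y in (0 : ℝ)..((b - a) / 2), |y| ^ n)
        = ((b - a) / 2) ^ (n + 1) / ((n : ℝ) + 1) := by
      rw [intervalIntegral.integral_congr (g := fun y : ℝ => y ^ n)
        (fun y hy => by
          rw [uIcc_of_le hr0] at hy
          simp [abs_of_nonneg hy.1])]
      simp
    have e2 : (∫ y in (-((b - a) / 2))..(0 : ℝ), |y| ^ n)
        = ((b - a) / 2) ^ (n + 1) / ((n : ℝ) + 1) := by
      have h3 : (∫ y in (-((b - a) / 2))..(0 : ℝ), |y| ^ n)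
          = ∫ y in (-((b - a) / 2))..(0 : ℝ), (fun z : ℝ => |z| ^ n) (-y) := by
        congr 1; funext y; simp [abs_neg]
      rw [h3, intervalIntegral.integral_comp_neg (fun z : ℝ => |z| ^ n)]
      simpa using e1
    have hadd := intervalIntegral.integral_add_adjacent_intervals
      (a := -((b - a) / 2)) (b := (0 : ℝ)) (c := (b - a) / 2) (f := fun y : ℝ => |y| ^ n)
      ((continuous_abs.pow n).intervalIntegrable (μ := volume) _ _)
      ((continuous_abs.pow n).intervalIntegrable (μ := volume) _ _)
    rw [e1, e2] at hadd
    rw [← hadd]; ring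
  have hJ2 : (∫ t in a..b, |(a + b) / 2 - t| ^ n / (Nat.factorial n : ℝ) * ((Γn - γn) / 2))
      = (Γn - γn) * ((b - a) / 2) ^ (n + 1) / (Nat.factorial (n + 1) : ℝ) := by
    have : (fun t : ℝ => |(a + b) / 2 - t| ^ n / (Nat.factorial n : ℝ) * ((Γn - γn) / 2))
        = fun t : ℝ => ((Γn - γn) / 2 / (Nat.factorial n : ℝ)) * |(a + b) / 2 - t| ^ n := by
      funext t; ring
    rw [this, intervalIntegral.integral_const_mul, hJ, Nat.factorial_succ]
    push_cast
    field_simp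
  rw [hJ2, abs_of_nonneg (div_nonneg (mul_nonneg (by linarith) (by positivity)) (by positivity))]
  apply le_of_eq
  rw [div_pow]
  field_simp
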